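/- (Quaternionic determinant formula for the second weighted zeta function) Let G be a finite connected graph with n vertices, m₀ non-loop edges, m₁ loops (at most one loop per vertex), and m' = 2m₀ + m₁ arcs. Let a, b: D(G) → ℍ, and define K, L, J₀, W̃, D̃ as above. Then for any complex variable t: det(I_{2m'} − t·ψ(K L* − J₀)) = (1−t²)^{2m₀−2n}·(1+t)^{2m₁}·det(I_{2n} − t·ψ(W̃) + t²·(ψ(D̃) − I_{2n})). -/

import Mathlib

open Quaternion Matrix Finset

noncomputable section

/-- Simplex part of a quaternion: `x = S(x) + j·P(x)`. -/
def qS (x : Quaternion ℝ) : ℂ := ⟨x.re, x.imI⟩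

/-- Perplex part of a quaternion. -/
def qP (x : Quaternion ℝ) : ℂ := ⟨x.imJ, -x.imK⟩

/-- Embedding of `ℂ` into the quaternions (span of `1, i`). -/
def cq (z : ℂ) : Quaternion ℝ := ⟨z.re, z.im, 0, 0⟩

/-- The quaternion unit `j`. -/
def jq : Quaternion ℝ := ⟨0, 0, 1, 0⟩

/-- The standard complex representation of a quaternionic matrix `M = A + jB`,
`ψ(M) = [[A, -conj B],[B, conj A]]`. -/
def psi {m n : Type*} (M : Matrix m n (Quaternion ℝ)) :
    Matrix (m ⊕ m) (n ⊕ n) ℂ :=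
  Matrix.fromBlocks (M.map qS) (-(M.map fun x => star (qP x)))
    (M.map qP) (M.map fun x => star (qS x))

variable {V : Type*}

/-- Arc-by-vertex matrix `K` with `K_{ev} = a(e)` if `o(e) = v`. Arcs are the
elements of a symmetric finite set `E` of ordered pairs of vertices. -/
def Karc [DecidableEq V] (E : Finset (V × V)) (a : V × V → Quaternion ℝ) :
    Matrix ↥E V (Quaternion ℝ) :=
  Matrix.of fun e v => if e.1.1 = v then a e.1 else 0

/-- Arc-by-vertex matrix `L` with `L_{ev} = b(e)` if `t(e) = v`. -/
def Larc [DecidableEq V] (E : Finset (V × V)) (b : V × V → Quaternion ℝ) :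
    Matrix ↥E V (Quaternion ℝ) :=
  Matrix.of fun e v => if e.1.2 = v then b e.1 else 0

/-- The arc-inversion matrix `J₀` with `(J₀)_{ef} = 1` iff `f = e⁻¹`. -/
def J0 [DecidableEq V] (E : Finset (V × V)) : Matrix ↥E ↥E (Quaternion ℝ) :=
  Matrix.of fun e f => if f.1 = Prod.swap e.1 then 1 else 0

/-- Transition matrix of the quaternionic Szegedy walk. -/
def SzeU [DecidableEq V] (E : Finset (V × V)) (q : V × V → Quaternion ℝ) :
    Matrix ↥E ↥E (Quaternion ℝ) :=
  Matrix.of fun e f =>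
    if f.1 = Prod.swap e.1 then 2 * (q e.1 * star (q e.1)) - 1
    else if f.1.2 = e.1.1 then 2 * (q e.1 * star (q (Prod.swap f.1))) else 0

/-- The doubly weighted matrix `W̃` for general arc weights `a, b`. -/
def Wt [DecidableEq V] (E : Finset (V × V)) (a b : V × V → Quaternion ℝ) :
    Matrix V V (Quaternion ℝ) :=
  Matrix.of fun u v => if (v, u) ∈ E then star (b (v, u)) * a (v, u) else 0

/-- The diagonal matrix `D̃` with `D̃_{uu} = Σ_{o(e)=u} b(e⁻¹)* a(e)`. -/
def Dt [DecidableEq V] (E : Finset (V × V)) (a b : V × V → Quaternion ℝ) :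
    Matrix V V (Quaternion ℝ) :=
  Matrix.of fun u v =>
    if u = v then ∑ e ∈ E.filter (fun p => p.1 = u), star (b (Prod.swap e)) * a e else 0

/-- The doubly weighted matrix of the quaternionic Szegedy walk. -/
def Wtil [DecidableEq V] (E : Finset (V × V)) (q : V × V → Quaternion ℝ) :
    Matrix V V (Quaternion ℝ) :=
  Matrix.of fun u v => if (v, u) ∈ E then 2 * (star (q (u, v)) * q (v, u)) else 0

/-- The number of loops of the graph. -/
def nLoops [DecidableEq V] (E : Finset (V × V)) : ℕ :=
  (E.filter fun p => p.1 = p.2).card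

/-!
Since `ψ` is multiplicative, put `X = ψ(K)`, `Y = ψ(L*)` and `J = ψ(J₀)`, an involution. Then
`(1 - t(XY - J))(1 - tJ) = (1 - t²) - tX · Y(1 - tJ)`, and the Weinstein–Aronszajn identity moves
the determinant from arcs to vertices, where `YX = ψ(W̃)` and `YJX = ψ(D̃)`. The remaining factor
`det(1 + tJ)` is read off the cycles of arc reversal: a pair `e, e⁻¹` contributes `1 - t²` and a
loop `1 + t` to `det(1 + tJ₀)`, and `det(1 + tψ(J₀)) = det(1 + tJ₀)²`. The argument divides by
`1 - t²`; continuity in `t` gives the values `t = ±1`.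
-/

namespace Matrix

variable {ι α β R : Type*} [Fintype ι] [Fintype α] [Fintype β] [DecidableEq ι] [DecidableEq α]
  [DecidableEq β] [CommRing R]

theorem det_smul_one_sub_mul_comm (u : R) (A : Matrix α β R) (B : Matrix β α R) :
    det (u • 1 - A * B) * u ^ Fintype.card β = det (u • 1 - B * A) * u ^ Fintype.card α := by
  have h := congrArg (Polynomial.eval u) (charpoly_mul_comm' A B)
  simp only [Polynomial.eval_mul, Polynomial.eval_pow, Polynomial.eval_X, eval_charpoly,
    scalar_apply, ← smul_one_eq_diagonal] at h
  rw [mul_comm, h, mul_comm]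

theorem det_one_sub_smul_mul_sub_of_mul_self_eq_one [IsDomain R] (X : Matrix α β R)
    (Y : Matrix β α R) {J : Matrix α α R} (hJ : J * J = 1) {t : R} (ht : 1 - t ^ 2 ≠ 0) :
    det (1 - t • (X * Y - J)) * (1 - t ^ 2) ^ Fintype.card β =
      det (1 + t • J) * det (1 - t • (Y * X) + t ^ 2 • (Y * J * X - 1)) := by
  have hleft : (1 - t • (X * Y - J)) * (1 - t • J) =
      (1 - t ^ 2) • 1 - (t • X) * (Y * (1 - t • J)) := by
    simp only [Matrix.mul_sub, Matrix.sub_mul, Matrix.mul_smul, Matrix.smul_mul, hJ,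
      Matrix.mul_one, Matrix.one_mul, Matrix.mul_assoc]
    module
  have hright : (1 - t ^ 2) • 1 - (Y * (1 - t • J)) * (t • X) =
      1 - t • (Y * X) + t ^ 2 • (Y * J * X - 1) := by
    simp only [Matrix.mul_sub, Matrix.sub_mul, Matrix.mul_smul, Matrix.smul_mul,
      Matrix.mul_one, Matrix.mul_assoc]
    module
  have hJdet : det (1 + t • J) * det (1 - t • J) = (1 - t ^ 2) ^ Fintype.card α := by
    have h : (1 + t • J) * (1 - t • J) = (1 - t ^ 2) • 1 := by
      simp only [Matrix.add_mul, Matrix.mul_sub, Matrix.smul_mul, Matrix.mul_smul, hJ,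
        Matrix.mul_one, Matrix.one_mul]
      module
    rw [← det_mul, h, det_smul, det_one, mul_one]
  apply mul_right_cancel₀ (pow_ne_zero (Fintype.card α) ht)
  calc det (1 - t • (X * Y - J)) * (1 - t ^ 2) ^ Fintype.card β * (1 - t ^ 2) ^ Fintype.card α
      = det (1 + t • J) *
          (det ((1 - t • (X * Y - J)) * (1 - t • J)) * (1 - t ^ 2) ^ Fintype.card β) := by
        rw [← hJdet, det_mul]; ring
    _ = _ := by rw [hleft, det_smul_one_sub_mul_comm, hright, mul_assoc]

theorem det_one_sub_eq_det_one_add_of_mul_mul_eq_neg {D B : Matrix ι ι R} (hD : D * D = 1)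
    (hB : D * B * D = -B) : det (1 - B) = det (1 + B) := by
  have hconj : D * (1 + B) * D = 1 - B := by
    rw [Matrix.mul_add, Matrix.add_mul, Matrix.mul_one, hD, hB, sub_eq_add_neg]
  rw [← hconj, det_mul, det_mul, mul_right_comm, ← det_mul, hD, det_one, one_mul]

theorem det_one_add_smul_permMatrix_sq {σ : Equiv.Perm ι} (hσ : Function.Involutive σ) (t : R) :
    det (1 + t • σ.permMatrix R) ^ 2 = ∏ i, if σ i = i then (1 + t) ^ 2 else 1 - t ^ 2 := by
  set B : Matrix ι ι R := of fun i j => if j = σ i ∧ σ i ≠ i then t else 0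
  have hfactor : 1 + t • σ.permMatrix R =
      diagonal (fun i => if σ i = i then 1 + t else 1) * (1 + B) := by
    ext i j
    by_cases hij : σ i = j <;> by_cases hi : σ i = i <;>
      simp [B, diagonal_mul, one_apply, hij, hi, eq_comm] <;> grind
  have hsq : B * B = diagonal (fun i => if σ i = i then 0 else t ^ 2) := by
    ext i j
    rw [mul_apply, Finset.sum_eq_single (σ i)]
    · by_cases hij : i = j
      · subst hij
        by_cases hi : σ i = i
        · simp [B, hi]
        · simp [B, hσ i, hi, Ne.symm hi, sq]
      · simp [B, hσ i, hij, Ne.symm hij]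
    · intro k _ hk
      simp [B, hk]
    · simp
  -- conjugation by a sign pattern that flips across every 2-cycle of `σ` negates `B`
  have hsign : det (1 - B) = det (1 + B) := by
    set e := Fintype.equivFin ι
    set s : ι → R := fun i => if e i < e (σ i) then 1 else -1
    refine det_one_sub_eq_det_one_add_of_mul_mul_eq_neg (D := diagonal s) ?_ ?_
    · rw [diagonal_mul_diagonal, ← diagonal_one]
      congr 1; ext i; simp only [s]; split_ifs <;> simp
    · ext i j
      rw [mul_diagonal, diagonal_mul]
      by_cases hj : j = σ i ∧ σ i ≠ i
      · obtain ⟨rfl, hi⟩ := hj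
        have hne : e i ≠ e (σ i) := fun h => hi (e.injective h).symm
        rcases hne.lt_or_gt with h | h <;> simp [B, s, hσ i, hi, h, h.not_gt]
      · simp [B, hj]
  calc det (1 + t • σ.permMatrix R) ^ 2
      = (∏ i, (if σ i = i then 1 + t else 1) ^ 2) * det ((1 + B) * (1 - B)) := by
        rw [hfactor, det_mul, det_mul, hsign, det_diagonal, Finset.prod_pow]; ring
    _ = _ := by
        rw [show (1 + B) * (1 - B) = 1 - B * B by noncomm_ring, hsq, ← diagonal_one,
          diagonal_sub, det_diagonal, ← Finset.prod_mul_distrib]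
        congr 1; ext i; split_ifs <;> simp

end Matrix

section QuaternionParts

@[simp] lemma qS_zero : qS 0 = 0 := by simp [qS, Complex.ext_iff]
@[simp] lemma qP_zero : qP 0 = 0 := by simp [qP, Complex.ext_iff]
@[simp] lemma qS_one : qS 1 = 1 := by simp [qS, Complex.ext_iff]
@[simp] lemma qP_one : qP 1 = 0 := by simp [qP, Complex.ext_iff]

lemma qS_add (x y : Quaternion ℝ) : qS (x + y) = qS x + qS y := by
  simp [qS, Complex.ext_iff]

lemma qP_add (x y : Quaternion ℝ) : qP (x + y) = qP x + qP y := by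
  simp [qP, Complex.ext_iff]; ring

lemma qS_sub (x y : Quaternion ℝ) : qS (x - y) = qS x - qS y := by
  simp [qS, Complex.ext_iff]

lemma qP_sub (x y : Quaternion ℝ) : qP (x - y) = qP x - qP y := by
  simp [qP, Complex.ext_iff]; ring

lemma qS_mul (x y : Quaternion ℝ) : qS (x * y) = qS x * qS y - star (qP x) * qP y := by
  simp [qS, qP, Complex.ext_iff]; constructor <;> ring

lemma qP_mul (x y : Quaternion ℝ) : qP (x * y) = star (qS x) * qP y + qP x * qS y := by
  simp [qS, qP, Complex.ext_iff]; constructor <;> ring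

lemma qS_sum {ι : Type*} (s : Finset ι) (f : ι → Quaternion ℝ) :
    qS (∑ i ∈ s, f i) = ∑ i ∈ s, qS (f i) :=
  map_sum (AddMonoidHom.mk' qS qS_add) f s

lemma qP_sum {ι : Type*} (s : Finset ι) (f : ι → Quaternion ℝ) :
    qP (∑ i ∈ s, f i) = ∑ i ∈ s, qP (f i) :=
  map_sum (AddMonoidHom.mk' qP qP_add) f s

end QuaternionParts

section Psi

variable {l m n : Type*}

lemma psi_one [DecidableEq m] : psi (1 : Matrix m m (Quaternion ℝ)) = 1 := by
  ext (i | i) (j | j) <;> simp [psi, one_apply, apply_ite qP]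

lemma psi_sub (M N : Matrix m n (Quaternion ℝ)) : psi (M - N) = psi M - psi N := by
  ext (i | i) (j | j) <;> simp [psi, qS_sub, qP_sub]; ring

lemma psi_mul [Fintype m] (M : Matrix l m (Quaternion ℝ)) (N : Matrix m n (Quaternion ℝ)) :
    psi (M * N) = psi M * psi N := by
  simp only [psi, fromBlocks_multiply]
  ext (i | i) (j | j) <;>
  · simp only [fromBlocks_apply₁₁, fromBlocks_apply₁₂, fromBlocks_apply₂₁, fromBlocks_apply₂₂,
      map_apply, mul_apply, Matrix.add_apply, Matrix.neg_apply, qS_sum, qP_sum, qS_mul, qP_mul,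
      star_add, star_mul', star_sub, star_star, star_sum, ← Finset.sum_neg_distrib,
      ← Finset.sum_add_distrib]
    exact Finset.sum_congr rfl fun k _ => by ring

lemma psi_permMatrix [DecidableEq m] (σ : Equiv.Perm m) :
    psi (σ.permMatrix (Quaternion ℝ)) = fromBlocks (σ.permMatrix ℂ) 0 0 (σ.permMatrix ℂ) := by
  ext (i | i) (j | j) <;> simp [psi, apply_ite qS, apply_ite qP]

end Psi

section Arcs

def arcReverse (E : Finset (V × V)) (hsym : ∀ p ∈ E, Prod.swap p ∈ E) : Equiv.Perm E :=
  Function.Involutive.toPerm (fun e => ⟨e.1.swap, hsym _ e.2⟩) fun e => by simp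

variable {E : Finset (V × V)}

@[simp] lemma coe_arcReverse (hsym : ∀ p ∈ E, Prod.swap p ∈ E) (e : E) :
    (arcReverse E hsym e : V × V) = e.1.swap :=
  rfl

@[simp] lemma arcReverse_symm (hsym : ∀ p ∈ E, Prod.swap p ∈ E) :
    (arcReverse E hsym).symm = arcReverse E hsym :=
  Function.Involutive.toPerm_symm _

lemma arcReverse_involutive (hsym : ∀ p ∈ E, Prod.swap p ∈ E) :
    Function.Involutive (arcReverse E hsym) := fun e =>
  Subtype.ext (by simp)

lemma arcReverse_eq_self_iff (hsym : ∀ p ∈ E, Prod.swap p ∈ E) (e : E) :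
    arcReverse E hsym e = e ↔ e.1.1 = e.1.2 := by
  simp [Subtype.ext_iff, Prod.ext_iff, eq_comm]

variable [DecidableEq V]

lemma J0_eq_permMatrix (hsym : ∀ p ∈ E, Prod.swap p ∈ E) :
    J0 E = (arcReverse E hsym).permMatrix (Quaternion ℝ) := by
  refine Matrix.ext fun e f => ?_
  simp [J0, Subtype.ext_iff, eq_comm]

lemma J0_mul_J0 (hsym : ∀ p ∈ E, Prod.swap p ∈ E) : J0 E * J0 E = 1 := by
  rw [J0_eq_permMatrix hsym, ← permMatrix_mul,
    show arcReverse E hsym * arcReverse E hsym = 1 from Equiv.ext (arcReverse_involutive hsym),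
    permMatrix_one]

lemma det_one_add_smul_psi_J0 (hsym : ∀ p ∈ E, Prod.swap p ∈ E) (t : ℂ) :
    det (1 + t • psi (J0 E)) = (1 - t ^ 2) ^ (E.card - nLoops E) * (1 + t) ^ (2 * nLoops E) := by
  rw [J0_eq_permMatrix hsym, psi_permMatrix, fromBlocks_smul, ← fromBlocks_one, fromBlocks_add,
    smul_zero, add_zero, det_fromBlocks_zero₂₁, ← sq,
    det_one_add_smul_permMatrix_sq (arcReverse_involutive hsym)]
  simp_rw [arcReverse_eq_self_iff]
  rw [Finset.prod_coe_sort E fun p => if p.1 = p.2 then (1 + t) ^ 2 else 1 - t ^ 2,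
    Finset.prod_ite, Finset.prod_const, Finset.prod_const, ← pow_mul, mul_comm]
  congr 2
  have := Finset.card_filter_add_card_filter_not (s := E) (fun p : V × V => p.1 = p.2)
  unfold nLoops
  omega

lemma Larc_conjTranspose_mul_Karc (a b : V × V → Quaternion ℝ) :
    (Larc E b)ᴴ * Karc E a = Wt E a b := by
  refine Matrix.ext fun u v => ?_
  have hterm : ∀ e : E, star (Larc E b e u) * Karc E a e v =
      if e.1 = (v, u) then star (b e.1) * a e.1 else 0 := fun e => by
    by_cases h : e.1 = (v, u)
    · simp [Larc, Karc, h]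
    · simp only [Larc, Karc, of_apply, if_neg h]
      split_ifs <;> simp_all [Prod.ext_iff]
  simp only [mul_apply, conjTranspose_apply, hterm, Wt, of_apply]
  rw [Finset.sum_coe_sort E fun p => if p = (v, u) then star (b p) * a p else 0,
    Finset.sum_ite_eq']

lemma Larc_conjTranspose_mul_J0_mul_Karc (hsym : ∀ p ∈ E, Prod.swap p ∈ E)
    (a b : V × V → Quaternion ℝ) :
    (Larc E b)ᴴ * J0 E * Karc E a = Dt E a b := by
  refine Matrix.ext fun u v => ?_
  rw [J0_eq_permMatrix hsym, Equiv.Perm.permMatrix, PEquiv.mul_toMatrix_toPEquiv]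
  simp only [mul_apply, submatrix_apply, id, arcReverse_symm, conjTranspose_apply, Larc, Karc,
    of_apply, coe_arcReverse, Prod.snd_swap, Dt]
  split_ifs with huv
  · subst huv
    rw [Finset.sum_filter, ← Finset.sum_coe_sort E]
    exact Finset.sum_congr rfl fun e _ => by split_ifs <;> simp_all
  · refine Finset.sum_eq_zero fun e _ => ?_
    split_ifs <;> simp_all

end Arcs

/-- Here `E.card - nLoops E` is the number `2m₀` of non-loop arcs; dividing by `(1 - t²)^{2n}`
gives the formula in its original form. -/
theorem quat_det_formula_general [Fintype V] [DecidableEq V] (E : Finset (V × V))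
    (hsym : ∀ p ∈ E, Prod.swap p ∈ E)
    (a b : V × V → Quaternion ℝ) (t : ℂ) :
    Matrix.det (1 - t • psi (Karc E a * (Larc E b)ᴴ - J0 E)) *
        (1 - t ^ 2) ^ (2 * Fintype.card V) =
      (1 - t ^ 2) ^ (E.card - nLoops E) * (1 + t) ^ (2 * nLoops E) *
        Matrix.det (1 - t • psi (Wt E a b) + t ^ 2 • (psi (Dt E a b) - 1)) := by
  have hgeneric : ∀ s ∈ ({1, -1} : Set ℂ)ᶜ,
      det (1 - s • psi (Karc E a * (Larc E b)ᴴ - J0 E)) * (1 - s ^ 2) ^ (2 * Fintype.card V) =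
        (1 - s ^ 2) ^ (E.card - nLoops E) * (1 + s) ^ (2 * nLoops E) *
          det (1 - s • psi (Wt E a b) + s ^ 2 • (psi (Dt E a b) - 1)) := by
    intro s hs
    have hs' : 1 - s ^ 2 ≠ 0 := by
      rw [sub_ne_zero, ne_comm, Ne, sq_eq_one_iff]
      simpa [not_or] using hs
    have hJ : psi (J0 E) * psi (J0 E) = 1 := by rw [← psi_mul, J0_mul_J0 hsym, psi_one]
    have h := det_one_sub_smul_mul_sub_of_mul_self_eq_one (psi (Karc E a)) (psi (Larc E b)ᴴ)
      hJ hs'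
    rwa [← psi_mul, ← psi_sub, ← psi_mul, ← psi_mul, ← psi_mul, Larc_conjTranspose_mul_Karc,
      Larc_conjTranspose_mul_J0_mul_Karc hsym, det_one_add_smul_psi_J0 hsym, Fintype.card_sum,
      ← two_mul] at h
  refine congrFun (Continuous.ext_on ((Set.toFinite _).countable.dense_compl ℂ) ?_ ?_ hgeneric) t
    <;> fun_prop

/-- Quaternionic determinant formula for the second weighted zeta function, in
cross-multiplied polynomial form: multiplying both sides of
`det(I − tψ(KL*−J₀)) = (1−t²)^{2m₀−2n}(1+t)^{2m₁} det(I − tψ(W̃) + t²(ψ(D̃)−I))`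
by `(1−t²)^{2n}` (here `2m₀ = |D(G)| − m₁` is the number of non-loop arcs). -/
theorem quat_det_formula [Fintype V] [DecidableEq V] (E : Finset (V × V))
    (hsym : ∀ p ∈ E, Prod.swap p ∈ E)
    (hconn : ∀ u v : V, Relation.ReflTransGen (fun x y => (x, y) ∈ E) u v)
    (a b : V × V → Quaternion ℝ) (t : ℂ) :
    Matrix.det (1 - t • psi (Karc E a * (Larc E b)ᴴ - J0 E)) *
        (1 - t ^ 2) ^ (2 * Fintype.card V) =
      (1 - t ^ 2) ^ (E.card - nLoops E) * (1 + t) ^ (2 * nLoops E) *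
        Matrix.det (1 - t • psi (Wt E a b) + t ^ 2 • (psi (Dt E a b) - 1)) :=
  quat_det_formula_general E hsym a b t
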